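/- arXiv:2512.12708 — 2 statements merged into one kernel-verified Lean document; each statement's English description precedes it below -/
import Mathlib

section
/- The function Γ(τ, X) = κ X² coth(τκ) satisfies the risk-neutral reduced HJB equation ∂Γ/∂τ = κ² X² − (1/4)(∂Γ/∂X)² for all τ > 0 and X ∈ ℝ. -/
/-! Along `τ` the value function is `κ X² coth(τκ)`, with `τ`-derivative `-κ² X² / sinh²(τκ)`;
along `X` it is a quadratic with `X`-derivative `2κ X coth(τκ)`. The HJB equation then reduces to
the identity `coth² − 1 = 1 / sinh²`. -/

open Real

theorem cosh_div_sinh_sq_sub_one {x : ℝ} (hx : sinh x ≠ 0) :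
    (cosh x / sinh x) ^ 2 - 1 = 1 / sinh x ^ 2 := by
  field_simp
  linear_combination cosh_sq x

theorem hasDerivAt_cosh_mul_div_sinh_mul (κ : ℝ) {t : ℝ} (ht : sinh (t * κ) ≠ 0) :
    HasDerivAt (fun s => cosh (s * κ) / sinh (s * κ)) (-κ / sinh (t * κ) ^ 2) t := by
  refine ((hasDerivAt_mul_const κ).cosh.div (hasDerivAt_mul_const κ).sinh ht).congr_deriv ?_
  congr 1
  linear_combination (-κ) * cosh_sq (t * κ)

/-- `Γ(τ, X) = κ X² coth(τκ)` satisfies the risk-neutral reduced HJB equation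
`∂Γ/∂τ = κ² X² − (1/4)(∂Γ/∂X)²` for all `τ > 0` and `X ∈ ℝ`. -/
theorem riskNeutral_closedForm_solves_HJB (κ : ℝ) (hκ : 0 < κ) (τ X : ℝ) (hτ : 0 < τ) :
    deriv (fun s : ℝ => κ * X ^ 2 * (Real.cosh (s * κ) / Real.sinh (s * κ))) τ
      = κ ^ 2 * X ^ 2
        - (1 / 4) * (deriv (fun x : ℝ => κ * x ^ 2 * (Real.cosh (τ * κ) / Real.sinh (τ * κ))) X) ^ 2 := by
  have hsinh : sinh (τ * κ) ≠ 0 := (sinh_pos_iff.mpr (mul_pos hτ hκ)).ne'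
  have hτ_deriv := (hasDerivAt_cosh_mul_div_sinh_mul κ hsinh).const_mul (κ * X ^ 2)
  have hX_deriv := ((hasDerivAt_pow 2 X).const_mul κ).mul_const (cosh (τ * κ) / sinh (τ * κ))
  rw [hτ_deriv.deriv, hX_deriv.deriv]
  linear_combination (κ ^ 2 * X ^ 2) * cosh_div_sinh_sq_sub_one hsinh
end

section
/- The partial value function term u(τ, S) = −(λ² S² e^{σ²τ} / (4κ²)) ∫₀^τ tanh(uκ/2)² e^{−σ²u} du satisfies ∂u/∂τ = (1/2)σ²S² ∂²u/∂S² − (λ²S²/(4κ²)) tanh(τκ/2)². -/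
/-- The `S`-dependent, `X`-independent component of the Gatheral–Schied value function:
`u(τ, S) = −(λ² S² e^{σ²τ} / (4κ²)) ∫₀^τ tanh(uκ/2)² e^{−σ²u} du`. -/
noncomputable def uPart (σ κ lam : ℝ) (τ S : ℝ) : ℝ :=
  -(lam ^ 2 * S ^ 2 * Real.exp (σ ^ 2 * τ) / (4 * κ ^ 2))
    * ∫ u in (0:ℝ)..τ, Real.tanh (u * κ / 2) ^ 2 * Real.exp (-(σ ^ 2) * u)

/-- `u(τ, S)` satisfies `∂u/∂τ = (1/2)σ²S² ∂²u/∂S² − (λ²S²/(4κ²)) tanh(τκ/2)²`. -/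
theorem uPart_pde (σ κ lam : ℝ) (hσ : 0 < σ) (hκ : 0 < κ) (hlam : 0 < lam)
    (τ S : ℝ) (hτ : 0 < τ) :
    deriv (fun s : ℝ => uPart σ κ lam s S) τ
      = (1 / 2) * σ ^ 2 * S ^ 2
          * deriv (fun s : ℝ => deriv (fun s' : ℝ => uPart σ κ lam τ s') s) S
        - (lam ^ 2 * S ^ 2 / (4 * κ ^ 2)) * Real.tanh (τ * κ / 2) ^ 2 := by
  set f : ℝ → ℝ := fun u => Real.tanh (u * κ / 2) ^ 2 * Real.exp (-(σ ^ 2) * u) with hfdef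
  have htanh : Continuous Real.tanh := by
    have h : Real.tanh = fun x => Real.sinh x / Real.cosh x :=
      funext fun x => Real.tanh_eq_sinh_div_cosh x
    rw [h]
    exact Real.continuous_sinh.div Real.continuous_cosh fun x => (Real.cosh_pos x).ne'
  have hfc : Continuous f := by
    apply Continuous.mul
    · exact (htanh.comp (by continuity)).pow 2
    · exact Real.continuous_exp.comp (by continuity)
  set F : ℝ → ℝ := fun t => ∫ u in (0:ℝ)..t, f u with hFdef
  have hF : HasDerivAt F (f τ) τ := (hfc.integral_hasStrictDerivAt 0 τ).hasDerivAt
  -- derivative in τ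
  have hE : HasDerivAt (fun s : ℝ => Real.exp (σ ^ 2 * s)) (σ ^ 2 * Real.exp (σ ^ 2 * τ)) τ := by
    have := HasDerivAt.exp ((hasDerivAt_id τ).const_mul (σ ^ 2))
    simpa [mul_comm] using this
  have hL : HasDerivAt (fun s : ℝ => uPart σ κ lam s S)
      (-(lam ^ 2 * S ^ 2 / (4 * κ ^ 2)) *
        (σ ^ 2 * Real.exp (σ ^ 2 * τ) * F τ + Real.exp (σ ^ 2 * τ) * f τ)) τ := by
    have heq : (fun s : ℝ => uPart σ κ lam s S)
        = fun s : ℝ => -(lam ^ 2 * S ^ 2 / (4 * κ ^ 2)) * (Real.exp (σ ^ 2 * s) * F s) := by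
      funext s; unfold uPart; ring
    rw [heq]
    exact (hE.mul hF).const_mul _
  rw [hL.deriv]
  -- second derivative in S
  have hinner : ∀ s : ℝ, deriv (fun s' : ℝ => uPart σ κ lam τ s') s
      = -(lam ^ 2 * Real.exp (σ ^ 2 * τ) / (4 * κ ^ 2)) * F τ * (2 * s) := by
    intro s
    have h1 : HasDerivAt
        (fun s' : ℝ => -(lam ^ 2 * Real.exp (σ ^ 2 * τ) / (4 * κ ^ 2)) * F τ * s' ^ 2)
        (-(lam ^ 2 * Real.exp (σ ^ 2 * τ) / (4 * κ ^ 2)) * F τ * (2 * s)) s := by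
      have := (hasDerivAt_pow 2 s).const_mul
        (-(lam ^ 2 * Real.exp (σ ^ 2 * τ) / (4 * κ ^ 2)) * F τ)
      simpa [mul_comm, mul_assoc, mul_left_comm] using this
    have h2 : (fun s' : ℝ => uPart σ κ lam τ s')
        = fun s' : ℝ => -(lam ^ 2 * Real.exp (σ ^ 2 * τ) / (4 * κ ^ 2)) * F τ * s' ^ 2 := by
      funext s'; unfold uPart; ring
    rw [h2, h1.deriv]
  have hfun : (fun s : ℝ => deriv (fun s' : ℝ => uPart σ κ lam τ s') s)
      = fun s : ℝ => (-(lam ^ 2 * Real.exp (σ ^ 2 * τ) / (4 * κ ^ 2)) * F τ * 2) * s := by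
    funext s; rw [hinner s]; ring
  have hSS : deriv (fun s : ℝ => deriv (fun s' : ℝ => uPart σ κ lam τ s') s) S
      = -(lam ^ 2 * Real.exp (σ ^ 2 * τ) / (4 * κ ^ 2)) * F τ * 2 := by
    rw [hfun]
    have h := ((hasDerivAt_id S).const_mul
      (-(lam ^ 2 * Real.exp (σ ^ 2 * τ) / (4 * κ ^ 2)) * F τ * 2)).deriv
    simp only [id_eq, mul_one] at h
    exact h
  rw [hSS]
  have hexp : Real.exp (σ ^ 2 * τ) * f τ = Real.tanh (τ * κ / 2) ^ 2 := by
    simp only [hfdef]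
    rw [mul_comm (Real.tanh (τ * κ / 2) ^ 2) (Real.exp (-(σ ^ 2) * τ)), ← mul_assoc,
      ← Real.exp_add]
    have h0 : σ ^ 2 * τ + -(σ ^ 2) * τ = 0 := by ring
    rw [h0, Real.exp_zero, one_mul]
  rw [hexp]
  ring
end
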